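/- arXiv:2302.03810 — 12 statements merged into one kernel-verified Lean document; each statement's English description precedes it below -/
import Mathlib

section
/- Let V be a tie-free merit matrix and let r'_y be the induced ranking of individuals for each resource y (ranking individuals in order of decreasing merit for y). Then a matching M is fair according to Axiom 1 (fair toward every individual) if and only if M is a stable matching with respect to the individual rankings (r_x) and the induced resource rankings (r'_y), i.e., M has no blocking pair. -/
/-- A merit matrix `V` (individual `x`'s merit for resource `y` is `V x y`)
is tie-free if no two distinct individuals have the same merit for a resource. -/
def TieFree (n : ℕ) (V : Fin n → Fin n → ℝ) : Prop :=
  ∀ (y : Fin n) (x x' : Fin n), x ≠ x' → V x y ≠ V x' y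

/-- `r' y` is the ranking of individuals induced by the merit matrix `V` at resource `y`:
individuals with larger merit receive smaller (better) ranks. Ranks are `Fin n`,
with smaller meaning more preferred. -/
def InducedRanking (n : ℕ) (V : Fin n → Fin n → ℝ) (r' : Fin n → Fin n ≃ Fin n) : Prop :=
  ∀ (y : Fin n) (x x' : Fin n), r' y x < r' y x' ↔ V x' y < V x y

/-- A matching `M : Fin n ≃ Fin n` (individuals to resources) is fair toward individual `x`
(Axiom 1): whenever resource `y` goes to an individual with less merit than `x`,
individual `x` must obtain a resource she strictly prefers over `y`.
`r x y` is the rank (smaller = more preferred) individual `x` assigns to resource `y`. -/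
def FairToward (n : ℕ) (r : Fin n → Fin n ≃ Fin n) (V : Fin n → Fin n → ℝ)
    (M : Fin n ≃ Fin n) (x : Fin n) : Prop :=
  ∀ y : Fin n, V (M.symm y) y < V x y → r x (M x) < r x y

/-- `(x, y)` is a blocking pair for matching `M` with respect to the
individual rankings `r` and resource rankings `r'`. -/
def BlockingPair (n : ℕ) (r r' : Fin n → Fin n ≃ Fin n) (M : Fin n ≃ Fin n)
    (x y : Fin n) : Prop :=
  r x y < r x (M x) ∧ r' y x < r' y (M.symm y)

/-- Proposition 1 (fairness–stability equivalence): given a tie-free merit matrix `V`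
and the induced resource rankings `r'`, a matching `M` is fair according to Axiom 1
(fair toward every individual) iff `M` is stable w.r.t. `(r, r')`, i.e. has no blocking pair. -/
theorem fairness_iff_stable (n : ℕ) (r r' : Fin n → Fin n ≃ Fin n)
    (V : Fin n → Fin n → ℝ) (htf : TieFree n V) (hind : InducedRanking n V r')
    (M : Fin n ≃ Fin n) :
    (∀ x : Fin n, FairToward n r V M x) ↔ ¬ ∃ x y : Fin n, BlockingPair n r r' M x y := by
  constructor
  · rintro hf ⟨x, y, h1, h2⟩
    exact absurd ((hf x) y ((hind y x (M.symm y)).mp h2)) (not_lt.mpr h1.le)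
  · intro hs x y hv
    by_contra hlt
    rcases lt_trichotomy (r x y) (r x (M x)) with h | h | h
    · exact hs ⟨x, y, h, (hind y x (M.symm y)).mpr hv⟩
    · have : y = M x := (r x).injective h
      subst this
      simp at hv
    · exact hlt h
end

section
/- For every tie-free merit matrix V and every collection of individual preference rankings (r_x), there exists a matching M that is fair according to Axiom 1 (equivalently, by the fairness–stability equivalence, a stable matching with respect to (r_x) and the induced resource rankings (r'_y) exists). -/
def GSInv (n : ℕ) (r : Fin n → Fin n ≃ Fin n) (V : Fin n → Fin n → ℝ)
    (k : Fin n → Fin n) : Prop :=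
  ∀ x y : Fin n, r x y < k x →
    ∃ x', (r x').symm (k x') = y ∧ V x y < V x' y


lemma fair_of_inj (n : ℕ) (r : Fin n → Fin n ≃ Fin n) (V : Fin n → Fin n → ℝ)
    (k : Fin n → Fin n) (hI : GSInv n r V k)
    (hinj : Function.Injective fun x => (r x).symm (k x)) :
    ∃ M : Fin n ≃ Fin n, ∀ x, FairToward n r V M x := by
  have hbij : Function.Bijective fun x => (r x).symm (k x) :=
    Finite.injective_iff_bijective.1 hinj
  refine ⟨Equiv.ofBijective _ hbij, ?_⟩
  intro x y hV
  set M := Equiv.ofBijective _ hbij with hMdef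
  have hMx : M x = (r x).symm (k x) := rfl
  have hrMx : r x (M x) = k x := by rw [hMx]; simp
  rw [hrMx]
  rcases lt_trichotomy (r x y) (k x) with h | h | h
  · exfalso
    obtain ⟨x', hc, hlt⟩ := hI x y h
    have hMx' : M x' = y := hc
    have : M.symm y = x' := by rw [← hMx']; exact M.symm_apply_apply x'
    rw [this] at hV
    exact lt_asymm hlt hV
  · exfalso
    have hy : y = M x := by
      rw [hMx, ← h]; simp
    rw [hy, Equiv.symm_apply_apply] at hV
    exact lt_irrefl _ hV
  · exact h

lemma gs_step (n : ℕ) (r : Fin n → Fin n ≃ Fin n) (V : Fin n → Fin n → ℝ)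
    (k : Fin n → Fin n) (hI : GSInv n r V k) (x0 x1 : Fin n) (hne : x1 ≠ x0)
    (hc : (r x1).symm (k x1) = (r x0).symm (k x0))
    (hV01 : V x0 ((r x0).symm (k x0)) < V x1 ((r x0).symm (k x0))) :
    ∃ k' : Fin n → Fin n, GSInv n r V k' ∧
      ∑ x, (k' x : ℕ) = 1 + ∑ x, (k x : ℕ) := by
  classical
  set y0 := (r x0).symm (k x0) with hy0
  have hwit : ∀ j : Fin n, j < k x0 →
      ∃ x', (r x').symm (k x') = (r x0).symm j ∧
        V x0 ((r x0).symm j) < V x' ((r x0).symm j) := by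
    intro j hj
    exact hI x0 ((r x0).symm j) (by simpa using hj)
  choose w hw1 hw2 using hwit
  -- bound: k x0 + 2 ≤ n
  have hbound : (k x0 : ℕ) + 2 ≤ n := by
    have hjlt : ∀ j : Fin (k x0 : ℕ),
        (⟨(j : ℕ), j.isLt.trans (k x0).isLt⟩ : Fin n) < k x0 := fun j => j.isLt
    set φ : Fin (k x0 : ℕ) → Fin n := fun j => w _ (hjlt j) with hφ
    have hφc : ∀ j : Fin (k x0 : ℕ),
        (r (φ j)).symm (k (φ j)) = (r x0).symm ⟨(j : ℕ), j.isLt.trans (k x0).isLt⟩ :=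
      fun j => hw1 _ (hjlt j)
    have hφinj : Function.Injective φ := by
      intro i j hij
      have h := hφc i
      rw [hij, hφc j] at h
      have h2 := (r x0).symm.injective h
      have h3 := congrArg Fin.val h2
      simp only [Fin.val_mk] at h3
      exact Fin.ext h3.symm
    have hφne0 : ∀ j, φ j ≠ x0 := by
      intro j h
      have h0 := hφc j
      rw [h] at h0
      have h2 := (r x0).symm.injective h0
      have h3 := congrArg Fin.val h2
      simp only [Fin.val_mk] at h3
      have h4 : (j : ℕ) < (k x0 : ℕ) := hjlt j
      omega
    have hφne1 : ∀ j, φ j ≠ x1 := by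
      intro j h
      have h0 := hφc j
      rw [h, hc] at h0
      have h2 := (r x0).symm.injective h0
      have h3 := congrArg Fin.val h2
      simp only [Fin.val_mk] at h3
      have h4 : (j : ℕ) < (k x0 : ℕ) := hjlt j
      omega
    have h2 : x0 ∉ Finset.image φ Finset.univ := by
      simp only [Finset.mem_image]; rintro ⟨j, -, h⟩; exact hφne0 j h
    have h3 : x1 ∉ insert x0 (Finset.image φ Finset.univ) := by
      simp only [Finset.mem_insert, Finset.mem_image]
      rintro (h | ⟨j, -, h⟩); exact hne h; exact hφne1 j h
    calc (k x0 : ℕ) + 2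
        = (insert x1 (insert x0 (Finset.image φ Finset.univ))).card := by
          rw [Finset.card_insert_of_notMem h3, Finset.card_insert_of_notMem h2,
            Finset.card_image_of_injective _ hφinj, Finset.card_univ, Fintype.card_fin]
      _ ≤ (Finset.univ : Finset (Fin n)).card := Finset.card_le_univ _
      _ = n := by simp
  have hlt : (k x0 : ℕ) + 1 < n := by omega
  refine ⟨Function.update k x0 ⟨(k x0 : ℕ) + 1, hlt⟩, ?_, ?_⟩
  · intro x y hxy
    have key : ∃ x', (r x').symm (k x') = y ∧ V x y < V x' y := by
      by_cases hx : x = x0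
      · subst hx
        rw [Function.update_self] at hxy
        have h' : (r x y : ℕ) < (k x : ℕ) + 1 := hxy
        rcases Nat.lt_succ_iff_lt_or_eq.1 h' with h | h
        · exact hI x y (by exact h)
        · have hy : y = y0 := by
            rw [hy0]
            have h2 : r x y = k x := Fin.ext h
            rw [← h2]; simp
          exact ⟨x1, by rw [hc]; exact hy.symm, by rw [hy]; exact hV01⟩
      · rw [Function.update_of_ne hx] at hxy
        exact hI x y hxy
    obtain ⟨x', h1, h2⟩ := key
    by_cases hx' : x' = x0
    · subst hx'
      have hy : y = y0 := by rw [hy0]; exact h1.symm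
      refine ⟨x1, ?_, ?_⟩
      · rw [Function.update_of_ne hne, hc]; exact hy.symm
      · rw [hy] at h2 ⊢
        exact h2.trans hV01
    · exact ⟨x', by rw [Function.update_of_ne hx']; exact h1, h2⟩
  · have hins : (Finset.univ : Finset (Fin n)) = insert x0 (Finset.univ.erase x0) :=
      (Finset.insert_erase (Finset.mem_univ x0)).symm
    rw [hins, Finset.sum_insert (Finset.notMem_erase _ _),
        Finset.sum_insert (Finset.notMem_erase _ _), Function.update_self]
    have heq : ∑ x ∈ Finset.univ.erase x0,
          ((Function.update k x0 ⟨(k x0 : ℕ) + 1, hlt⟩ x : Fin n) : ℕ)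
        = ∑ x ∈ Finset.univ.erase x0, (k x : ℕ) :=
      Finset.sum_congr rfl fun x hx => by
        rw [Function.update_of_ne (Finset.ne_of_mem_erase hx)]
    rw [heq]
    simp only [Fin.val_mk]
    omega


lemma gs_main (n : ℕ) (r : Fin n → Fin n ≃ Fin n) (V : Fin n → Fin n → ℝ)
    (htf : TieFree n V) :
    ∀ N : ℕ, ∀ k : Fin n → Fin n, GSInv n r V k → n * n ≤ N + ∑ x, (k x : ℕ) →
      ∃ M : Fin n ≃ Fin n, ∀ x, FairToward n r V M x := by
  intro N
  induction N with
  | zero =>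
    intro k hI hN
    have hle : ∑ x, (k x : ℕ) ≤ n * (n - 1) := by
      calc ∑ x, (k x : ℕ) ≤ ∑ _x : Fin n, (n - 1) :=
            Finset.sum_le_sum fun x _ => by have := (k x).isLt; omega
        _ = n * (n - 1) := by simp [Finset.sum_const, mul_comm]
    have hn : n = 0 := by
      rcases Nat.eq_zero_or_pos n with h | h
      · exact h
      · exfalso; simp only [Nat.zero_add] at hN
        have h2 : n * (n - 1) < n * n :=
          Nat.mul_lt_mul_of_pos_left (Nat.sub_lt h one_pos) h
        omega
    subst hn
    exact ⟨Equiv.refl _, fun x => x.elim0⟩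
  | succ N ih =>
    intro k hI hN
    by_cases hinj : Function.Injective fun x => (r x).symm (k x)
    · exact fair_of_inj n r V k hI hinj
    · rw [Function.not_injective_iff] at hinj
      obtain ⟨a, b, hab, hne⟩ := hinj
      have hy : (r a).symm (k a) = (r b).symm (k b) := hab
      have hVne := htf ((r a).symm (k a)) a b hne
      rcases lt_or_gt_of_ne hVne with h | h
      · -- a has lower merit: reject a, witness b
        obtain ⟨k', hI', hsum⟩ := gs_step n r V k hI a b (Ne.symm hne) hy.symm
          (by exact h)
        exact ih k' hI' (by omega)
      · -- b has lower merit: reject b, witness a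
        obtain ⟨k', hI', hsum⟩ := gs_step n r V k hI b a hne hy
          (by rw [← hy]; exact h)
        exact ih k' hI' (by omega)

/-- For every tie-free merit matrix and every collection of individual preference
rankings, a fair matching (Axiom 1) exists. -/
theorem fair_matching_exists (n : ℕ) (r : Fin n → Fin n ≃ Fin n)
    (V : Fin n → Fin n → ℝ) (htf : TieFree n V) :
    ∃ M : Fin n ≃ Fin n, ∀ x : Fin n, FairToward n r V M x := by
  rcases Nat.eq_zero_or_pos n with hn | hn
  · subst hn
    exact ⟨Equiv.refl _, fun x => x.elim0⟩
  · refine gs_main n r V htf (n * n) (fun _ => ⟨0, hn⟩) ?_ ?_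
    · intro x y hxy
      exact absurd hxy (by simp [Fin.lt_def])
    · simp
end

section
/- Let ℓ be fairness values satisfying the per-row CDF property and the column condition, and let π be its increment matrix, π_{x,y} = ℓ_{x,r_x(y)} − ℓ_{x,r_x(y)−1}. Then π is doubly stochastic, and for every φ ∈ [0,1], π satisfies the φ-fairness constraints with respect to ℓ; in particular π is a feasible solution of the linear program OPT-LP_Fair for every φ ∈ [0,1]. -/
/-- Fairness values `ℓ x k` (for `k ∈ {0, 1, …, n}`) satisfy the per-row CDF property:
`0 = ℓ x 0 ≤ ℓ x 1 ≤ ⋯ ≤ ℓ x n = 1` for each individual `x`. -/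
def RowCDF (n : ℕ) (ℓ : Fin n → ℕ → ℝ) : Prop :=
  ∀ x : Fin n, ℓ x 0 = 0 ∧ ℓ x n = 1 ∧ ∀ k : ℕ, k < n → ℓ x k ≤ ℓ x (k + 1)

/-- The column condition: for each resource `y`,
`∑_x (ℓ_{x, r_x(y)} − ℓ_{x, r_x(y) − 1}) = 1`.
Here `r x : Fin n ≃ Fin n` gives the 0-indexed rank of each resource for individual `x`
(smaller = more preferred), so the paper's 1-indexed rank `r_x(y)` is `(r x y : ℕ) + 1`. -/
def ColCond (n : ℕ) (r : Fin n → Fin n ≃ Fin n) (ℓ : Fin n → ℕ → ℝ) : Prop :=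
  ∀ y : Fin n, ∑ x : Fin n, (ℓ x ((r x y : ℕ) + 1) - ℓ x (r x y : ℕ)) = 1

/-- The increment matrix of fairness values `ℓ`: `π_{x,y} = ℓ_{x, r_x(y)} − ℓ_{x, r_x(y) − 1}`. -/
def increment (n : ℕ) (r : Fin n → Fin n ≃ Fin n) (ℓ : Fin n → ℕ → ℝ) :
    Fin n → Fin n → ℝ :=
  fun x y => ℓ x ((r x y : ℕ) + 1) - ℓ x (r x y : ℕ)

/-- An `n × n` real matrix is doubly stochastic: nonnegative entries,
each row sums to 1 and each column sums to 1. -/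
def DoublyStochastic (n : ℕ) (P : Fin n → Fin n → ℝ) : Prop :=
  (∀ x y, 0 ≤ P x y) ∧ (∀ x, ∑ y : Fin n, P x y = 1) ∧ (∀ y, ∑ x : Fin n, P x y = 1)

/-- `P` satisfies the φ-fairness constraints with respect to fairness values `ℓ`:
for all `x` and all `k ∈ {1, …, n}`, `∑_{i=1}^k P_{x, r_x⁻¹(i)} ≥ φ · ℓ_{x,k}`.
The sum over the top-`k` ranked resources of `x` is the sum over resources
of 0-indexed rank `< k`. -/
def FairConstraints (n : ℕ) (r : Fin n → Fin n ≃ Fin n) (φ : ℝ)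
    (ℓ : Fin n → ℕ → ℝ) (P : Fin n → Fin n → ℝ) : Prop :=
  ∀ x : Fin n, ∀ k : ℕ, 1 ≤ k → k ≤ n →
    φ * ℓ x k ≤ ∑ y ∈ Finset.univ.filter (fun y : Fin n => (r x y : ℕ) < k), P x y

/-- The principal's utility of a matrix `P` with respect to utilities `μ`. -/
def Util (n : ℕ) (μ P : Fin n → Fin n → ℝ) : ℝ :=
  ∑ x : Fin n, ∑ y : Fin n, μ x y * P x y

lemma partial_sum_increment (n : ℕ) (r : Fin n → Fin n ≃ Fin n) (ℓ : Fin n → ℕ → ℝ)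
    (x : Fin n) (k : ℕ) (hk : k ≤ n) :
    ∑ y ∈ Finset.univ.filter (fun y : Fin n => (r x y : ℕ) < k), increment n r ℓ x y
      = ℓ x k - ℓ x 0 := by
  have h1 : ∑ y ∈ Finset.univ.filter (fun y : Fin n => (r x y : ℕ) < k),
      increment n r ℓ x y
      = ∑ y : Fin n, if ((r x y : ℕ) < k) then (ℓ x ((r x y : ℕ) + 1) - ℓ x (r x y : ℕ)) else 0 := by
    rw [Finset.sum_filter]; rfl
  rw [h1, Equiv.sum_comp (r x) (fun i : Fin n => if ((i : ℕ) < k) then (ℓ x ((i : ℕ) + 1) - ℓ x (i : ℕ)) else 0)]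
  rw [Fin.sum_univ_eq_sum_range (fun i : ℕ => if (i < k) then (ℓ x (i + 1) - ℓ x i) else 0)]
  rw [← Finset.sum_filter]
  have h2 : Finset.filter (fun i => i < k) (Finset.range n) = Finset.range k := by
    ext i; simp [Finset.mem_filter, Finset.mem_range]; omega
  rw [h2, Finset.sum_range_sub (fun i => ℓ x i)]

/-- Proposition 2: if fairness values `ℓ` satisfy the per-row CDF property and the
column condition, then the increment matrix `π` of `ℓ` is doubly stochastic and
satisfies the φ-fairness constraints with respect to `ℓ` for every `φ ∈ [0,1]`;
in particular it is feasible for OPT-LP_Fair for every `φ ∈ [0,1]`. -/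
theorem increment_feasible (n : ℕ) (r : Fin n → Fin n ≃ Fin n) (ℓ : Fin n → ℕ → ℝ)
    (hcdf : RowCDF n ℓ) (hcol : ColCond n r ℓ) :
    DoublyStochastic n (increment n r ℓ) ∧
      ∀ φ : ℝ, 0 ≤ φ → φ ≤ 1 → FairConstraints n r φ ℓ (increment n r ℓ) := by
  have hnonneg : ∀ x : Fin n, ∀ k : ℕ, k ≤ n → 0 ≤ ℓ x k := by
    intro x k hk
    induction k with
    | zero => rw [(hcdf x).1]
    | succ m ih =>
      exact le_trans (ih (by omega)) ((hcdf x).2.2 m (by omega))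
  have hrow : ∀ x : Fin n, ∑ y : Fin n, increment n r ℓ x y = 1 := by
    intro x
    have h := partial_sum_increment n r ℓ x n le_rfl
    have hfil : Finset.univ.filter (fun y : Fin n => (r x y : ℕ) < n) = Finset.univ := by
      ext y; simp [Fin.is_lt]
    rw [hfil] at h
    rw [h, (hcdf x).1, (hcdf x).2.1]; ring
  refine ⟨⟨?_, hrow, hcol⟩, ?_⟩
  · intro x y
    have := (hcdf x).2.2 (r x y : ℕ) (Fin.is_lt _)
    simpa [increment] using this
  · intro φ hφ0 hφ1 x k hk1 hkn
    rw [partial_sum_increment n r ℓ x k hkn, (hcdf x).1, sub_zero]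
    calc φ * ℓ x k ≤ 1 * ℓ x k := mul_le_mul_of_nonneg_right hφ1 (hnonneg x k hkn)
    _ = ℓ x k := one_mul _
end

section
/- Let ε > 0 and let ℓ̂ be fairness values satisfying the per-row CDF property and the column condition. Define ℓ̃_{x,k} = (ℓ̂_{x,k} + kε)/(nε+1) and π̂_{x,y} = (ℓ̂_{x,r_x(y)} − ℓ̂_{x,r_x(y)−1} + ε)/(nε+1). Then π̂ is doubly stochastic and satisfies the φ-fairness constraints with respect to ℓ̃ for every φ ∈ [0,1]; in particular, the perturbed linear program (OPT-LP_Fair with right-hand side ℓ̃ in place of ℓ) is feasible. -/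

lemma filter_sum_rank (n : ℕ) (r : Fin n → Fin n ≃ Fin n) (x : Fin n) (k : ℕ) (hk : k ≤ n)
    (F : ℕ → ℝ) :
    ∑ y ∈ Finset.univ.filter (fun y : Fin n => (r x y : ℕ) < k), F (r x y : ℕ)
      = ∑ j ∈ Finset.range k, F j := by
  rw [Finset.sum_filter]
  rw [Fintype.sum_equiv (r x) _ (fun i : Fin n => if (i : ℕ) < k then F i else 0) (fun i => rfl)]
  rw [Fin.sum_univ_eq_sum_range (fun j => if j < k then F j else 0)]
  rw [← Finset.sum_filter]
  congr 1
  ext j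
  simp only [Finset.mem_filter, Finset.mem_range]
  omega

lemma telescope_rank (n : ℕ) (r : Fin n → Fin n ≃ Fin n) (x : Fin n) (k : ℕ) (hk : k ≤ n)
    (g : ℕ → ℝ) :
    ∑ y ∈ Finset.univ.filter (fun y : Fin n => (r x y : ℕ) < k),
      (g ((r x y : ℕ) + 1) - g (r x y : ℕ)) = g k - g 0 := by
  rw [filter_sum_rank n r x k hk (fun j => g (j + 1) - g j), Finset.sum_range_sub]

/-- Feasibility of the perturbed LP: with `ℓ̃_{x,k} = (ℓ̂_{x,k} + kε)/(nε+1)` and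
`π̂_{x,y} = (ℓ̂_{x,r_x(y)} − ℓ̂_{x,r_x(y)−1} + ε)/(nε+1)`, the matrix `π̂` is doubly
stochastic and satisfies the φ-fairness constraints with respect to `ℓ̃` for every
`φ ∈ [0,1]`; in particular the perturbed LP is feasible. -/
theorem perturbed_increment_feasible (n : ℕ) (r : Fin n → Fin n ≃ Fin n) (ε : ℝ)
    (hε : 0 < ε) (ℓhat : Fin n → ℕ → ℝ) (hcdf : RowCDF n ℓhat) (hcol : ColCond n r ℓhat) :
    DoublyStochastic n
        (fun x y => (ℓhat x ((r x y : ℕ) + 1) - ℓhat x (r x y : ℕ) + ε) / (n * ε + 1)) ∧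
      ∀ φ : ℝ, 0 ≤ φ → φ ≤ 1 →
        FairConstraints n r φ (fun x k => (ℓhat x k + k * ε) / (n * ε + 1))
          (fun x y => (ℓhat x ((r x y : ℕ) + 1) - ℓhat x (r x y : ℕ) + ε) / (n * ε + 1)) := by
  have hden : (0 : ℝ) < n * ε + 1 := by positivity
  have hfull : ∀ x : Fin n,
      Finset.univ.filter (fun y : Fin n => (r x y : ℕ) < n) = Finset.univ := by
    intro x; ext y; simp [(r x y).isLt]
  constructor
  · refine ⟨?_, ?_, ?_⟩
    · intro x y
      have hmono := (hcdf x).2.2 (r x y : ℕ) (r x y).isLt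
      have : (0:ℝ) ≤ ℓhat x ((r x y : ℕ) + 1) - ℓhat x (r x y : ℕ) + ε := by linarith
      positivity
    · intro x
      rw [← Finset.sum_div, Finset.sum_add_distrib]
      have h1 : ∑ y : Fin n, (ℓhat x ((r x y : ℕ) + 1) - ℓhat x (r x y : ℕ)) = 1 := by
        rw [← hfull x, telescope_rank n r x n le_rfl, (hcdf x).1, (hcdf x).2.1]; ring
      rw [h1, Finset.sum_const, Finset.card_univ, Fintype.card_fin]
      field_simp
      ring
    · intro y
      rw [← Finset.sum_div, Finset.sum_add_distrib, hcol y,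
        Finset.sum_const, Finset.card_univ, Fintype.card_fin]
      field_simp
      ring
  · intro φ hφ0 hφ1 x k hk1 hkn
    have hsum : ∑ y ∈ Finset.univ.filter (fun y : Fin n => (r x y : ℕ) < k),
        (ℓhat x ((r x y : ℕ) + 1) - ℓhat x (r x y : ℕ) + ε) / (n * ε + 1)
        = (ℓhat x k + k * ε) / (n * ε + 1) := by
      rw [← Finset.sum_div, Finset.sum_add_distrib, telescope_rank n r x k hkn,
        Finset.sum_const, (hcdf x).1]
      have hcard : (Finset.univ.filter (fun y : Fin n => (r x y : ℕ) < k)).card = k := by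
        have := filter_sum_rank n r x k hkn (fun _ => (1:ℝ))
        simp only [Finset.sum_const, Finset.card_range, nsmul_eq_mul, mul_one] at this
        exact_mod_cast this
      rw [hcard]
      push_cast
      ring_nf
    rw [hsum]
    have hℓ0 : 0 ≤ ℓhat x k := by
      have : ∀ m : ℕ, m ≤ n → 0 ≤ ℓhat x m := by
        intro m hm
        induction m with
        | zero => rw [(hcdf x).1]
        | succ p ih =>
          exact le_trans (ih (by omega)) ((hcdf x).2.2 p (by omega))
      exact this k hkn
    have hnum : 0 ≤ (ℓhat x k + k * ε) / (n * ε + 1) := by positivity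
    nlinarith
end

section
/- Let φ ∈ [0,1] and ε > 0, let ℓ and ℓ̂ be fairness values satisfying the per-row CDF property with |ℓ̂_{x,k} − ℓ_{x,k}| ≤ ε/2 for all x and k, and define ℓ̃_{x,k} = (ℓ̂_{x,k} + kε)/(nε+1). Then every matrix P satisfying the φ-fairness constraints with respect to ℓ̃ also satisfies the (φ·(1+ε/2)/(nε+1))-fairness constraints with respect to the true values ℓ; that is, for all x and all k ∈ {1,…,n}: ∑_{i=1}^k P_{x, r_x⁻¹(i)} ≥ (φ·(1+ε/2)/(nε+1))·ℓ_{x,k}. -/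
/-- Fairness transfer: any matrix satisfying the φ-fairness constraints with respect to
`ℓ̃_{x,k} = (ℓ̂_{x,k} + kε)/(nε+1)` also satisfies the `(φ(1+ε/2)/(nε+1))`-fairness
constraints with respect to the true values `ℓ`. -/
theorem fairness_transfer (n : ℕ) (r : Fin n → Fin n ≃ Fin n) (φ ε : ℝ)
    (hφ0 : 0 ≤ φ) (hφ1 : φ ≤ 1) (hε : 0 < ε) (ℓ ℓhat : Fin n → ℕ → ℝ)
    (hcdf : RowCDF n ℓ) (hcdfhat : RowCDF n ℓhat)
    (herr : ∀ x : Fin n, ∀ k : ℕ, k ≤ n → |ℓhat x k - ℓ x k| ≤ ε / 2)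
    (P : Fin n → Fin n → ℝ)
    (hfair : FairConstraints n r φ (fun x k => (ℓhat x k + k * ε) / (n * ε + 1)) P) :
    FairConstraints n r (φ * (1 + ε / 2) / (n * ε + 1)) ℓ P := by
  intro x k hk1 hkn
  have hden : (0:ℝ) < n * ε + 1 := by positivity
  refine le_trans ?_ (hfair x k hk1 hkn)
  show _ ≤ φ * ((ℓhat x k + k * ε) / (n * ε + 1))
  rw [div_mul_eq_mul_div, mul_div_assoc' φ, div_le_div_iff₀ hden hden]
  obtain ⟨h0, hn, hmono⟩ := hcdf x
  have mono : ∀ a b : ℕ, a ≤ b → b ≤ n → ℓ x a ≤ ℓ x b := by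
    intro a b hab hbn
    induction b with
    | zero => interval_cases a; exact le_refl _
    | succ b ih =>
      rcases Nat.lt_or_ge a (b+1) with h|h
      · exact le_trans (ih (Nat.lt_succ_iff.mp h) (le_trans (Nat.le_succ b) hbn))
          (hmono b (Nat.lt_of_succ_le hbn))
      · have : a = b+1 := le_antisymm hab h
        subst this; exact le_refl _
  have hle1 : ℓ x k ≤ 1 := hn ▸ mono k n hkn le_rfl
  have hge0 : 0 ≤ ℓ x k := h0 ▸ mono 0 k (Nat.zero_le k) hkn
  have herrk := abs_le.mp (herr x k hkn)
  have hkε : (1:ℝ) ≤ (k:ℝ) := by exact_mod_cast hk1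
  ring_nf
  nlinarith [mul_le_of_le_one_right hφ0 hle1, mul_nonneg hφ0 hge0,
    mul_le_mul_of_nonneg_left herrk.1 hφ0,
    mul_le_mul_of_nonneg_left (mul_le_mul_of_nonneg_right hkε hε.le) hφ0,
    mul_le_mul_of_nonneg_right (mul_le_of_le_one_right hφ0 hle1) hε.le]
end

section
/- Let φ ∈ [0,1] and ε > 0, let ℓ and ℓ̂ be fairness values satisfying the per-row CDF property and the column condition, with |ℓ̂_{x,k} − ℓ_{x,k}| ≤ ε/2 for all x and k. Let π̃ be the increment matrix of ℓ, let π̂_{x,y} = (ℓ̂_{x,r_x(y)} − ℓ̂_{x,r_x(y)−1} + ε)/(nε+1), and let P* be any doubly stochastic matrix. Define W = ((φnε+φ)/(φnε+1))·π̂ + (1/(φnε+1))·P* − (φ/(φnε+1))·π̃. Then W is doubly stochastic: all entries of W are nonnegative, and every row and every column of W sums to 1. -/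
/-- The matrix `W = ((φnε+φ)/(φnε+1))·π̂ + (1/(φnε+1))·P* − (φ/(φnε+1))·π̃`
is doubly stochastic. -/
theorem W_doubly_stochastic (n : ℕ) (r : Fin n → Fin n ≃ Fin n) (φ ε : ℝ)
    (hφ0 : 0 ≤ φ) (hφ1 : φ ≤ 1) (hε : 0 < ε) (ℓ ℓhat : Fin n → ℕ → ℝ)
    (hcdf : RowCDF n ℓ) (hcol : ColCond n r ℓ)
    (hcdfhat : RowCDF n ℓhat) (hcolhat : ColCond n r ℓhat)
    (herr : ∀ x : Fin n, ∀ k : ℕ, k ≤ n → |ℓhat x k - ℓ x k| ≤ ε / 2)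
    (Pstar : Fin n → Fin n → ℝ) (hPds : DoublyStochastic n Pstar) :
    DoublyStochastic n
      (fun x y =>
        ((φ * n * ε + φ) / (φ * n * ε + 1)) *
            ((ℓhat x ((r x y : ℕ) + 1) - ℓhat x (r x y : ℕ) + ε) / (n * ε + 1)) +
          (1 / (φ * n * ε + 1)) * Pstar x y -
          (φ / (φ * n * ε + 1)) * increment n r ℓ x y) := by
  obtain ⟨hP0, hProw, hPcol⟩ := hPds
  have hnε : (0:ℝ) ≤ (n:ℝ) * ε := mul_nonneg (Nat.cast_nonneg n) hε.le
  have hd : (0:ℝ) < φ * n * ε + 1 := by nlinarith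
  have hd' : (φ * (n:ℝ) * ε + 1) ≠ 0 := ne_of_gt hd
  have he : ((n:ℝ) * ε + 1) ≠ 0 := by positivity
  -- row sums of increments
  have key : ∀ (L : Fin n → ℕ → ℝ), RowCDF n L → ∀ x : Fin n,
      ∑ y : Fin n, (L x ((r x y : ℕ) + 1) - L x (r x y : ℕ)) = 1 := by
    intro L hL x
    have h1 : ∑ y : Fin n, (L x ((r x y : ℕ) + 1) - L x (r x y : ℕ))
        = ∑ j : Fin n, (L x ((j : ℕ) + 1) - L x (j : ℕ)) :=
      Fintype.sum_equiv (r x) _ _ (fun y => rfl)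
    rw [h1, Fin.sum_univ_eq_sum_range (fun j => L x (j + 1) - L x j),
      Finset.sum_range_sub (fun j => L x j), (hL x).1, (hL x).2.1]
    ring
  refine ⟨?_, ?_, ?_⟩
  · intro x y
    set k : ℕ := (r x y : ℕ) with hk
    have hkn : k < n := (r x y).isLt
    have hΔhat : 0 ≤ ℓhat x (k + 1) - ℓhat x k := by
      have := (hcdfhat x).2.2 k hkn; linarith
    have hΔle : ℓ x (k + 1) - ℓ x k ≤ (ℓhat x (k + 1) - ℓhat x k) + ε := by
      have h1 := abs_le.mp (herr x k hkn.le)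
      have h2 := abs_le.mp (herr x (k + 1) hkn)
      linarith [h1.1, h1.2, h2.1, h2.2]
    have hmain : ((φ * n * ε + φ) / (φ * n * ε + 1)) *
            ((ℓhat x (k + 1) - ℓhat x k + ε) / (n * ε + 1))
        = (φ * ((ℓhat x (k + 1) - ℓhat x k) + ε)) / (φ * n * ε + 1) := by
      field_simp
    simp only [increment, ← hk, hmain]
    have h3 : φ * (ℓ x (k + 1) - ℓ x k) ≤ φ * ((ℓhat x (k + 1) - ℓhat x k) + ε) :=
      mul_le_mul_of_nonneg_left hΔle hφ0
    have h4 : 0 ≤ Pstar x y := hP0 x y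
    have heq : φ * (ℓhat x (k + 1) - ℓhat x k + ε) / (φ * ↑n * ε + 1)
        + 1 / (φ * ↑n * ε + 1) * Pstar x y - φ / (φ * ↑n * ε + 1) * (ℓ x (k + 1) - ℓ x k)
        = (φ * (ℓhat x (k + 1) - ℓhat x k + ε) + Pstar x y
            - φ * (ℓ x (k + 1) - ℓ x k)) / (φ * ↑n * ε + 1) := by
      field_simp
    rw [heq]
    apply div_nonneg _ hd.le
    linarith
  · intro x
    simp only [Finset.sum_sub_distrib, Finset.sum_add_distrib, ← Finset.mul_sum]
    have h1 : ∑ y : Fin n, (ℓhat x ((r x y : ℕ) + 1) - ℓhat x (r x y : ℕ) + ε) / (n * ε + 1)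
        = ((∑ y : Fin n, (ℓhat x ((r x y : ℕ) + 1) - ℓhat x (r x y : ℕ))) + n * ε)
            / (n * ε + 1) := by
      rw [← Finset.sum_div, Finset.sum_add_distrib, Finset.sum_const, Finset.card_univ,
        Fintype.card_fin, nsmul_eq_mul]
    have h2 : ∑ y : Fin n, increment n r ℓ x y = 1 := by
      simpa [increment] using key ℓ hcdf x
    rw [h1, key ℓhat hcdfhat x, h2, hProw x]
    field_simp
    ring
  · intro y
    simp only [Finset.sum_sub_distrib, Finset.sum_add_distrib, ← Finset.mul_sum]
    have h1 : ∑ x : Fin n, (ℓhat x ((r x y : ℕ) + 1) - ℓhat x (r x y : ℕ) + ε) / (n * ε + 1)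
        = ((∑ x : Fin n, (ℓhat x ((r x y : ℕ) + 1) - ℓhat x (r x y : ℕ))) + n * ε)
            / (n * ε + 1) := by
      rw [← Finset.sum_div, Finset.sum_add_distrib, Finset.sum_const, Finset.card_univ,
        Fintype.card_fin, nsmul_eq_mul]
    have h2 : ∑ x : Fin n, increment n r ℓ x y = 1 := by
      simpa [increment] using hcol y
    rw [h1, hcolhat y, h2, hPcol y]
    field_simp
    ring
end

section
/- Let φ ∈ [0,1] and ε > 0, let ℓ and ℓ̂ be fairness values satisfying the per-row CDF property and the column condition, with |ℓ̂_{x,k} − ℓ_{x,k}| ≤ ε/2 for all x and k. Define ℓ̃_{x,k} = (ℓ̂_{x,k} + kε)/(nε+1), let π̃ be the increment matrix of ℓ, and let π̂_{x,y} = (ℓ̂_{x,r_x(y)} − ℓ̂_{x,r_x(y)−1} + ε)/(nε+1). Let P* be a doubly stochastic matrix satisfying the φ-fairness constraints with respect to ℓ, and define W = ((φnε+φ)/(φnε+1))·π̂ + (1/(φnε+1))·P* − (φ/(φnε+1))·π̃. Then W satisfies the φ-fairness constraints with respect to ℓ̃: for all x and all k ∈ {1,…,n}, ∑_{i=1}^k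 W_{x, r_x⁻¹(i)} ≥ φ·ℓ̃_{x,k}. -/
lemma rank_sum (n : ℕ) (r : Fin n → Fin n ≃ Fin n) (x : Fin n) (k : ℕ) (hk : k ≤ n)
    (h : ℕ → ℝ) :
    ∑ y ∈ Finset.univ.filter (fun y : Fin n => (r x y : ℕ) < k), h (r x y)
      = ∑ i ∈ Finset.range k, h i := by
  rw [Finset.sum_filter]
  rw [show (∑ a : Fin n, if ((r x) a : ℕ) < k then h ((r x) a) else 0)
      = ∑ i : Fin n, (if (i : ℕ) < k then h i else 0) from
    Equiv.sum_comp (r x) (fun i : Fin n => if (i : ℕ) < k then h i else 0)]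
  rw [Fin.sum_univ_eq_sum_range (fun i => if i < k then h i else 0) n]
  rw [← Finset.sum_filter]
  congr 1
  ext i
  simp only [Finset.mem_filter, Finset.mem_range]
  omega

lemma cdf_nonneg (n : ℕ) (ℓ : Fin n → ℕ → ℝ) (h : RowCDF n ℓ) (x : Fin n)
    (k : ℕ) (hk : k ≤ n) : 0 ≤ ℓ x k := by
  induction k with
  | zero => exact le_of_eq (h x).1.symm
  | succ m ih => exact le_trans (ih (by omega)) ((h x).2.2 m (by omega))

/-- The matrix `W = ((φnε+φ)/(φnε+1))·π̂ + (1/(φnε+1))·P* − (φ/(φnε+1))·π̃` satisfies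
the φ-fairness constraints with respect to `ℓ̃_{x,k} = (ℓ̂_{x,k} + kε)/(nε+1)` whenever
`P*` is doubly stochastic and satisfies the φ-fairness constraints with respect to `ℓ`. -/
theorem W_fair (n : ℕ) (r : Fin n → Fin n ≃ Fin n) (φ ε : ℝ)
    (hφ0 : 0 ≤ φ) (hφ1 : φ ≤ 1) (hε : 0 < ε) (ℓ ℓhat : Fin n → ℕ → ℝ)
    (hcdf : RowCDF n ℓ) (hcol : ColCond n r ℓ)
    (hcdfhat : RowCDF n ℓhat) (hcolhat : ColCond n r ℓhat)
    (herr : ∀ x : Fin n, ∀ k : ℕ, k ≤ n → |ℓhat x k - ℓ x k| ≤ ε / 2)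
    (Pstar : Fin n → Fin n → ℝ) (hPds : DoublyStochastic n Pstar)
    (hPfair : FairConstraints n r φ ℓ Pstar) :
    FairConstraints n r φ (fun x k => (ℓhat x k + k * ε) / (n * ε + 1))
      (fun x y =>
        ((φ * n * ε + φ) / (φ * n * ε + 1)) *
            ((ℓhat x ((r x y : ℕ) + 1) - ℓhat x (r x y : ℕ) + ε) / (n * ε + 1)) +
          (1 / (φ * n * ε + 1)) * Pstar x y -
          (φ / (φ * n * ε + 1)) * increment n r ℓ x y) := by
  intro x k hk1 hkn
  have hn0 : (0:ℝ) ≤ (n:ℝ) * ε := mul_nonneg (Nat.cast_nonneg n) hε.le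
  have hD : (0:ℝ) < φ * n * ε + 1 := by nlinarith
  have hN : (0:ℝ) < (n:ℝ) * ε + 1 := by nlinarith
  set S := Finset.univ.filter (fun y : Fin n => (r x y : ℕ) < k) with hS
  have tele : ∀ f : Fin n → ℕ → ℝ,
      ∑ y ∈ S, (f x ((r x y : ℕ) + 1) - f x (r x y : ℕ)) = f x k - f x 0 := by
    intro f
    rw [rank_sum n r x k hkn (fun i => f x (i+1) - f x i)]
    exact Finset.sum_range_sub (fun i => f x i) k
  have cardS : (S.card : ℝ) = k := by
    have : ∑ y ∈ S, (1:ℝ) = ∑ i ∈ Finset.range k, (1:ℝ) :=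
      rank_sum n r x k hkn (fun _ => 1)
    simpa using this
  have sumhat : ∑ y ∈ S, (ℓhat x ((r x y : ℕ) + 1) - ℓhat x (r x y : ℕ) + ε)
      = ℓhat x k + k * ε := by
    rw [Finset.sum_add_distrib, tele ℓhat, (hcdfhat x).1, Finset.sum_const, nsmul_eq_mul, cardS]
    ring
  have sumpi : ∑ y ∈ S, increment n r ℓ x y = ℓ x k := by
    have := tele ℓ
    rw [(hcdf x).1] at this
    simpa [increment] using this
  have hPs : φ * ℓ x k ≤ ∑ y ∈ S, Pstar x y := hPfair x k hk1 hkn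
  have hLhat : 0 ≤ ℓhat x k := cdf_nonneg n ℓhat hcdfhat x k hkn
  have hL : 0 ≤ (ℓhat x k + k * ε) := by positivity
  have expand : ∑ y ∈ S, (((φ * n * ε + φ) / (φ * n * ε + 1)) *
            ((ℓhat x ((r x y : ℕ) + 1) - ℓhat x (r x y : ℕ) + ε) / (n * ε + 1)) +
          (1 / (φ * n * ε + 1)) * Pstar x y -
          (φ / (φ * n * ε + 1)) * increment n r ℓ x y)
      = ((φ * n * ε + φ) / (φ * n * ε + 1)) * ((ℓhat x k + k * ε) / (n * ε + 1)) +
        (1 / (φ * n * ε + 1)) * (∑ y ∈ S, Pstar x y) -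
        (φ / (φ * n * ε + 1)) * ℓ x k := by
    rw [Finset.sum_sub_distrib, Finset.sum_add_distrib, ← Finset.mul_sum, ← Finset.mul_sum,
      ← Finset.mul_sum, sumpi, ← Finset.sum_div, sumhat]
  rw [expand]
  set s := ∑ y ∈ S, Pstar x y with hsdef
  set L := (ℓhat x k + ↑k * ε) / (↑n * ε + 1) with hLdef
  have hL2 : 0 ≤ L := by positivity
  have hA : φ * (φ * n * ε + 1) ≤ φ * n * ε + φ := by
    nlinarith [mul_nonneg (mul_nonneg hφ0 hn0) (sub_nonneg.mpr hφ1)]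
  have heq : (φ * ↑n * ε + φ) / (φ * ↑n * ε + 1) * L + 1 / (φ * ↑n * ε + 1) * s -
      φ / (φ * ↑n * ε + 1) * ℓ x k
      = ((φ * ↑n * ε + φ) * L + s - φ * ℓ x k) / (φ * ↑n * ε + 1) := by
    field_simp
  rw [heq, le_div_iff₀ hD]
  nlinarith [mul_le_mul_of_nonneg_right hA hL2]
end

section
/- Let φ ∈ [0,1] and ε > 0, let ℓ and ℓ̂ be fairness values satisfying the per-row CDF property and the column condition, with |ℓ̂_{x,k} − ℓ_{x,k}| ≤ ε/2 for all x and k. Let π̃ be the increment matrix of ℓ, let π̂_{x,y} = (ℓ̂_{x,r_x(y)} − ℓ̂_{x,r_x(y)−1} + ε)/(nε+1), let μ be nonnegative utilities, let P* be a doubly stochastic matrix satisfying the φ-fairness constraints with respect to ℓ, and define W = ((φnε+φ)/(φnε+1))·π̂ + (1/(φnε+1))·P* − (φ/(φnε+1))·π̃. Then U(W) ≥ (1/(φnε+1))·U(P*), where U(P) = ∑_{x,y} μ_{x,y} P_{x,y}. -/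
/-- Utility lower bound: for nonnegative utilities `μ` and the matrix
`W = ((φnε+φ)/(φnε+1))·π̂ + (1/(φnε+1))·P* − (φ/(φnε+1))·π̃`, we have
`U(W) ≥ (1/(φnε+1))·U(P*)`. -/
theorem W_utility (n : ℕ) (r : Fin n → Fin n ≃ Fin n) (φ ε : ℝ)
    (hφ0 : 0 ≤ φ) (hφ1 : φ ≤ 1) (hε : 0 < ε) (ℓ ℓhat : Fin n → ℕ → ℝ)
    (hcdf : RowCDF n ℓ) (hcol : ColCond n r ℓ)
    (hcdfhat : RowCDF n ℓhat) (hcolhat : ColCond n r ℓhat)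
    (herr : ∀ x : Fin n, ∀ k : ℕ, k ≤ n → |ℓhat x k - ℓ x k| ≤ ε / 2)
    (μ : Fin n → Fin n → ℝ) (hμ : ∀ x y, 0 ≤ μ x y)
    (Pstar : Fin n → Fin n → ℝ) (hPds : DoublyStochastic n Pstar)
    (hPfair : FairConstraints n r φ ℓ Pstar) :
    (1 / (φ * n * ε + 1)) * Util n μ Pstar ≤
      Util n μ
        (fun x y =>
          ((φ * n * ε + φ) / (φ * n * ε + 1)) *
              ((ℓhat x ((r x y : ℕ) + 1) - ℓhat x (r x y : ℕ) + ε) / (n * ε + 1)) +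
            (1 / (φ * n * ε + 1)) * Pstar x y -
            (φ / (φ * n * ε + 1)) * increment n r ℓ x y) := by
  have hn : (0:ℝ) ≤ n := Nat.cast_nonneg n
  have hc : (0:ℝ) < φ * n * ε + 1 := by positivity
  have hm : (0:ℝ) < (n:ℝ) * ε + 1 := by positivity
  unfold Util increment
  rw [Finset.mul_sum]
  apply Finset.sum_le_sum
  intro x _
  rw [Finset.mul_sum]
  apply Finset.sum_le_sum
  intro y _
  have hlt := (r x y).isLt
  have h1 := abs_le.mp (herr x ((r x y : ℕ) + 1) hlt)
  have h2 := abs_le.mp (herr x (r x y : ℕ) hlt.le)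
  have hA : 0 ≤ ℓhat x ((r x y:ℕ)+1) - ℓhat x (r x y:ℕ) + ε -
      (ℓ x ((r x y:ℕ)+1) - ℓ x (r x y:ℕ)) := by linarith [h1.1, h1.2, h2.1, h2.2]
  have key : ((φ * n * ε + φ) / (φ * n * ε + 1)) *
      ((ℓhat x ((r x y:ℕ)+1) - ℓhat x (r x y:ℕ) + ε) / (n * ε + 1)) =
      (φ / (φ * n * ε + 1)) * (ℓhat x ((r x y:ℕ)+1) - ℓhat x (r x y:ℕ) + ε) := by
    field_simp
  beta_reduce
  rw [key]
  have hnn : 0 ≤ (φ / (φ * n * ε + 1)) * μ x y *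
      (ℓhat x ((r x y:ℕ)+1) - ℓhat x (r x y:ℕ) + ε -
        (ℓ x ((r x y:ℕ)+1) - ℓ x (r x y:ℕ))) :=
    mul_nonneg (mul_nonneg (div_nonneg hφ0 hc.le) (hμ x y)) hA
  nlinarith [hnn]
end

section
/- Main theorem (sensitivity of the fair-matching LP): Let φ ∈ [0,1] and ε > 0, let ℓ and ℓ̂ be fairness values satisfying the per-row CDF property and the column condition, with |ℓ̂_{x,k} − ℓ_{x,k}| ≤ ε/2 for all x and k, define ℓ̃_{x,k} = (ℓ̂_{x,k} + kε)/(nε+1), and let μ be nonnegative utilities. Then: (i) there exists a doubly stochastic matrix satisfying the φ-fairness constraints with respect to ℓ̃ (the perturbed LP is feasible); and (ii) if P̂ is a doubly stochastic matrix satisfying the φ-fairness constraints with respect to ℓ̃ and maximizing U among all such matrices, and P* is a doubly stochastic matrix satisfying the φ-fairness constraints with respect to ℓ and maximizing U among all such matrices, then P̂ satisfies the (φ·(1+ε/2)/(nε+1))-fairness constraints with respect to ℓ, and U(P̂) ≥ (1/(φnε+1))·U(P*). -/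
lemma aux_telescope (n k : ℕ) (hk : k ≤ n) (e : Fin n ≃ Fin n) (f : ℕ → ℝ) :
    ∑ y ∈ Finset.univ.filter (fun y : Fin n => (e y : ℕ) < k),
      (f ((e y : ℕ) + 1) - f (e y : ℕ)) = f k - f 0 := by
  calc ∑ y ∈ Finset.univ.filter (fun y : Fin n => (e y : ℕ) < k),
        (f ((e y : ℕ) + 1) - f (e y : ℕ))
      = ∑ y : Fin n, (fun i : Fin n =>
          if (i : ℕ) < k then f ((i : ℕ) + 1) - f (i : ℕ) else 0) (e y) := by
        rw [Finset.sum_filter]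
    _ = ∑ i : Fin n, if (i : ℕ) < k then f ((i : ℕ) + 1) - f (i : ℕ) else 0 :=
        Equiv.sum_comp e (fun i : Fin n => if (i : ℕ) < k then f ((i : ℕ) + 1) - f (i : ℕ) else 0)
    _ = ∑ j ∈ Finset.range n, if j < k then f (j + 1) - f j else 0 :=
        Fin.sum_univ_eq_sum_range (fun j => if j < k then f (j + 1) - f j else 0) n
    _ = ∑ j ∈ (Finset.range n).filter (fun j => j < k), (f (j + 1) - f j) :=
        (Finset.sum_filter _ _).symm
    _ = ∑ j ∈ Finset.range k, (f (j + 1) - f j) := by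
        congr 1
        ext a
        simp only [Finset.mem_filter, Finset.mem_range]
        omega
    _ = f k - f 0 := Finset.sum_range_sub f k

lemma aux_mono {n : ℕ} {ℓ : Fin n → ℕ → ℝ} (h : RowCDF n ℓ)
    (x : Fin n) : ∀ {j m : ℕ}, j ≤ m → m ≤ n → ℓ x j ≤ ℓ x m := by
  intro j m hjm hmn
  induction m with
  | zero => simp [Nat.le_zero.mp hjm]
  | succ m ih =>
    rcases Nat.lt_or_ge j (m + 1) with hj | hj
    · exact le_trans (ih (by omega) (by omega)) ((h x).2.2 m (by omega))
    · have : j = m + 1 := by omega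
      simp [this]

lemma aux_incr (n : ℕ) (r : Fin n → Fin n ≃ Fin n) (L : Fin n → ℕ → ℝ)
    (hrow : RowCDF n L) (hcol : ColCond n r L) :
    DoublyStochastic n (increment n r L) ∧
      ∀ x : Fin n, ∀ k : ℕ, k ≤ n →
        ∑ y ∈ Finset.univ.filter (fun y : Fin n => (r x y : ℕ) < k),
          increment n r L x y = L x k := by
  have hpart : ∀ x : Fin n, ∀ k : ℕ, k ≤ n →
      ∑ y ∈ Finset.univ.filter (fun y : Fin n => (r x y : ℕ) < k),
        increment n r L x y = L x k := by
    intro x k hk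
    have h := aux_telescope n k hk (r x) (L x)
    simpa [increment, (hrow x).1] using h
  refine ⟨⟨?_, ?_, ?_⟩, hpart⟩
  · intro x y
    exact sub_nonneg.mpr ((hrow x).2.2 _ (r x y).isLt)
  · intro x
    have h := hpart x n le_rfl
    rw [Finset.filter_true_of_mem (fun y _ => (r x y).isLt)] at h
    rw [h, (hrow x).2.1]
  · intro y
    exact hcol y

/-- Main theorem (Theorem 1, sensitivity of the fair-matching LP). With
`ℓ̃_{x,k} = (ℓ̂_{x,k} + kε)/(nε+1)`:
(i) the perturbed LP is feasible, i.e., there is a doubly stochastic matrix satisfying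
the φ-fairness constraints with respect to `ℓ̃`; and
(ii) if `P̂` is optimal for the perturbed LP and `P*` is optimal for the true LP, then
`P̂` satisfies the `(φ(1+ε/2)/(nε+1))`-fairness constraints with respect to `ℓ` and
`U(P̂) ≥ (1/(φnε+1))·U(P*)`. -/
theorem main_sensitivity (n : ℕ) (r : Fin n → Fin n ≃ Fin n) (φ ε : ℝ)
    (hφ0 : 0 ≤ φ) (hφ1 : φ ≤ 1) (hε : 0 < ε) (ℓ ℓhat : Fin n → ℕ → ℝ)
    (hcdf : RowCDF n ℓ) (hcol : ColCond n r ℓ)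
    (hcdfhat : RowCDF n ℓhat) (hcolhat : ColCond n r ℓhat)
    (herr : ∀ x : Fin n, ∀ k : ℕ, k ≤ n → |ℓhat x k - ℓ x k| ≤ ε / 2)
    (μ : Fin n → Fin n → ℝ) (hμ : ∀ x y, 0 ≤ μ x y) :
    (∃ P : Fin n → Fin n → ℝ, DoublyStochastic n P ∧
        FairConstraints n r φ (fun x k => (ℓhat x k + k * ε) / (n * ε + 1)) P) ∧
      ∀ Phat Pstar : Fin n → Fin n → ℝ,
        DoublyStochastic n Phat →
        FairConstraints n r φ (fun x k => (ℓhat x k + k * ε) / (n * ε + 1)) Phat →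
        (∀ Q : Fin n → Fin n → ℝ, DoublyStochastic n Q →
          FairConstraints n r φ (fun x k => (ℓhat x k + k * ε) / (n * ε + 1)) Q →
          Util n μ Q ≤ Util n μ Phat) →
        DoublyStochastic n Pstar →
        FairConstraints n r φ ℓ Pstar →
        (∀ Q : Fin n → Fin n → ℝ, DoublyStochastic n Q →
          FairConstraints n r φ ℓ Q → Util n μ Q ≤ Util n μ Pstar) →
        FairConstraints n r (φ * (1 + ε / 2) / (n * ε + 1)) ℓ Phat ∧
          (1 / (φ * n * ε + 1)) * Util n μ Pstar ≤ Util n μ Phat := by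
  have hD : (0:ℝ) < (n:ℝ) * ε + 1 := by positivity
  set ℓt : Fin n → ℕ → ℝ := fun x k => (ℓhat x k + (k:ℝ) * ε) / ((n:ℝ) * ε + 1) with hℓt
  have hhat0 : ∀ (x : Fin n) (k : ℕ), k ≤ n → 0 ≤ ℓhat x k := by
    intro x k hk
    have h := aux_mono hcdfhat x (Nat.zero_le k) hk
    rwa [(hcdfhat x).1] at h
  have hℓt0 : ∀ (x : Fin n) (k : ℕ), k ≤ n → 0 ≤ ℓt x k := by
    intro x k hk
    have := hhat0 x k hk
    have h2 : (0:ℝ) ≤ (k:ℝ) * ε := by positivity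
    exact div_nonneg (by linarith) hD.le
  have hrowt : RowCDF n ℓt := by
    intro x
    refine ⟨?_, ?_, ?_⟩
    · simp [hℓt, (hcdfhat x).1]
    · simp only [hℓt]
      rw [(hcdfhat x).2.1, div_eq_one_iff_eq (ne_of_gt hD)]
      ring
    · intro k hk
      simp only [hℓt]
      have h1 := (hcdfhat x).2.2 k hk
      gcongr <;> (push_cast; nlinarith [h1, hε.le])
  have hcolt : ColCond n r ℓt := by
    intro y
    have hterm : ∀ x : Fin n, ℓt x ((r x y : ℕ) + 1) - ℓt x (r x y : ℕ) =
        ((ℓhat x ((r x y : ℕ) + 1) - ℓhat x (r x y : ℕ)) + ε) / ((n:ℝ) * ε + 1) := by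
      intro x
      simp only [hℓt]
      push_cast
      ring
    rw [Finset.sum_congr rfl (fun x _ => hterm x), ← Finset.sum_div,
      Finset.sum_add_distrib, hcolhat y, Finset.sum_const, Finset.card_univ,
      Fintype.card_fin, nsmul_eq_mul, div_eq_one_iff_eq (ne_of_gt hD)]
    ring
  obtain ⟨hPds, hPsum⟩ := aux_incr n r ℓt hrowt hcolt
  constructor
  · refine ⟨increment n r ℓt, hPds, ?_⟩
    intro x k hk1 hkn
    rw [hPsum x k hkn]
    have h0 := hℓt0 x k hkn
    nlinarith
  · intro Phat Pstar hdsPhat hfairPhat hoptPhat hdsPstar hfairPstar hoptPstar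
    constructor
    · -- fairness transfer to ℓ
      intro x k hk1 hkn
      have h1 := hfairPhat x k hk1 hkn
      have hl1 : ℓ x k ≤ 1 := by
        have h := aux_mono hcdf x hkn le_rfl
        rwa [(hcdf x).2.1] at h
      have hl0 : 0 ≤ ℓ x k := by
        have h := aux_mono hcdf x (Nat.zero_le k) hkn
        rwa [(hcdf x).1] at h
      have he := abs_le.mp (herr x k hkn)
      have hk1' : (1:ℝ) ≤ (k:ℝ) := by exact_mod_cast hk1
      refine le_trans ?_ h1
      have key : (1 + ε / 2) * ℓ x k ≤ ℓhat x k + (k:ℝ) * ε := by nlinarith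
      have key2 : φ * ((1 + ε / 2) * ℓ x k) ≤ φ * (ℓhat x k + (k:ℝ) * ε) :=
        mul_le_mul_of_nonneg_left key hφ0
      calc φ * (1 + ε / 2) / ((n:ℝ) * ε + 1) * ℓ x k
          = (φ * ((1 + ε / 2) * ℓ x k)) / ((n:ℝ) * ε + 1) := by ring
        _ ≤ (φ * (ℓhat x k + (k:ℝ) * ε)) / ((n:ℝ) * ε + 1) := by gcongr
        _ = φ * ℓt x k := by simp only [hℓt]; ring
    · -- utility bound
      by_cases hn0 : n = 0
      · subst hn0
        simp [Util]
      · have hn : (0:ℝ) < (n:ℝ) := by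
          have := Nat.pos_of_ne_zero hn0
          exact_mod_cast this
        set s : ℝ := φ * (n:ℝ) * ε with hs
        have hs0 : (0:ℝ) ≤ s := by positivity
        have hs1 : (0:ℝ) < s + 1 := by linarith
        set L : Fin n → ℕ → ℝ :=
          fun x k => (k:ℝ) / (n:ℝ) + (ℓhat x k - ℓ x k) / ((n:ℝ) * ε) with hL
        have hnε : (0:ℝ) < (n:ℝ) * ε := by positivity
        have hrowL : RowCDF n L := by
          intro x
          refine ⟨?_, ?_, ?_⟩
          · simp [hL, (hcdf x).1, (hcdfhat x).1]
          · simp only [hL]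
            rw [(hcdf x).2.1, (hcdfhat x).2.1, sub_self, zero_div, add_zero,
              div_self (ne_of_gt hn)]
          · intro k hk
            have ha := abs_le.mp (herr x k (le_of_lt hk))
            have hb := abs_le.mp (herr x (k + 1) hk)
            have expand : L x (k + 1) - L x k =
                (ε + ((ℓhat x (k+1) - ℓ x (k+1)) - (ℓhat x k - ℓ x k))) / ((n:ℝ) * ε) := by
              simp only [hL]
              push_cast
              field_simp
              ring
            have h0 : 0 ≤ L x (k + 1) - L x k := by
              rw [expand]
              apply div_nonneg _ hnε.le
              linarith [ha.2, hb.1]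
            linarith
        have hcolL : ColCond n r L := by
          intro y
          have hterm : ∀ x : Fin n, L x ((r x y : ℕ) + 1) - L x (r x y : ℕ) =
              1 / (n:ℝ) + ((ℓhat x ((r x y : ℕ) + 1) - ℓhat x (r x y : ℕ)) -
                (ℓ x ((r x y : ℕ) + 1) - ℓ x (r x y : ℕ))) / ((n:ℝ) * ε) := by
            intro x
            simp only [hL]
            push_cast
            ring
          rw [Finset.sum_congr rfl (fun x _ => hterm x), Finset.sum_add_distrib]
          have h1 : ∑ _x : Fin n, (1:ℝ) / (n:ℝ) = 1 := by
            rw [Finset.sum_const, Finset.card_univ, Fintype.card_fin, nsmul_eq_mul,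
              mul_one_div, div_self (ne_of_gt hn)]
          have h2 : ∑ x : Fin n, ((ℓhat x ((r x y : ℕ) + 1) - ℓhat x (r x y : ℕ)) -
              (ℓ x ((r x y : ℕ) + 1) - ℓ x (r x y : ℕ))) / ((n:ℝ) * ε) = 0 := by
            rw [← Finset.sum_div, Finset.sum_sub_distrib, hcolhat y, hcol y, sub_self,
              zero_div]
          rw [h1, h2, add_zero]
        obtain ⟨hMds, hMsum⟩ := aux_incr n r L hrowL hcolL
        set M := increment n r L with hM
        set Q : Fin n → Fin n → ℝ := fun x y => (Pstar x y + s * M x y) / (s + 1) with hQ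
        have hQds : DoublyStochastic n Q := by
          refine ⟨?_, ?_, ?_⟩
          · intro x y
            simp only [hQ]
            exact div_nonneg (add_nonneg (hdsPstar.1 x y)
              (mul_nonneg hs0 (hMds.1 x y))) hs1.le
          · intro x
            simp only [hQ]
            rw [← Finset.sum_div, Finset.sum_add_distrib, ← Finset.mul_sum,
              hdsPstar.2.1 x, hMds.2.1 x, mul_one, add_comm]
            exact div_self (ne_of_gt hs1)
          · intro y
            simp only [hQ]
            rw [← Finset.sum_div, Finset.sum_add_distrib, ← Finset.mul_sum,
              hdsPstar.2.2 y, hMds.2.2 y, mul_one, add_comm]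
            exact div_self (ne_of_gt hs1)
        have hQfair : FairConstraints n r φ ℓt Q := by
          intro x k hk1 hkn
          have hSQ : ∑ y ∈ Finset.univ.filter (fun y : Fin n => (r x y : ℕ) < k), Q x y =
              ((∑ y ∈ Finset.univ.filter (fun y : Fin n => (r x y : ℕ) < k), Pstar x y)
                + s * L x k) / (s + 1) := by
            simp only [hQ]
            rw [← Finset.sum_div, Finset.sum_add_distrib, ← Finset.mul_sum, hMsum x k hkn]
          rw [hSQ, le_div_iff₀ hs1]
          have hSP := hfairPstar x k hk1 hkn
          have hLk : s * L x k = φ * ((k:ℝ) * ε) + φ * (ℓhat x k - ℓ x k) := by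
            simp only [hL, hs]
            field_simp
          have hlt2 : φ * ((n:ℝ) * ε + 1) * ℓt x k = φ * (ℓhat x k + (k:ℝ) * ε) := by
            simp only [hℓt]
            field_simp
          have h0t : 0 ≤ ℓt x k := hℓt0 x k hkn
          nlinarith [mul_nonneg (mul_nonneg hφ0 hnε.le) h0t,
            mul_nonneg (mul_nonneg (sub_nonneg.mpr hφ1) (mul_nonneg hφ0 hnε.le)) h0t]
        have hUQ := hoptPhat Q hQds hQfair
        have hUM : 0 ≤ Util n μ M :=
          Finset.sum_nonneg fun x _ => Finset.sum_nonneg fun y _ =>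
            mul_nonneg (hμ x y) (hMds.1 x y)
        have hQutil : (s + 1) * Util n μ Q = Util n μ Pstar + s * Util n μ M := by
          simp only [Util, hQ, Finset.mul_sum, ← Finset.sum_add_distrib]
          refine Finset.sum_congr rfl fun x _ => Finset.sum_congr rfl fun y _ => ?_
          field_simp
        have hQU : Util n μ Q = (Util n μ Pstar + s * Util n μ M) / (s + 1) := by
          rw [eq_div_iff (ne_of_gt hs1)]
          linarith
        calc 1 / (s + 1) * Util n μ Pstar = Util n μ Pstar / (s + 1) := by ring
          _ ≤ (Util n μ Pstar + s * Util n μ M) / (s + 1) := by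
              gcongr
              nlinarith [mul_nonneg hs0 hUM]
          _ = Util n μ Q := hQU.symm
          _ ≤ Util n μ Phat := hUQ
end

section
/- Mixing algorithm guarantee: Let φ ∈ [0,1], let ℓ be fairness values satisfying the per-row CDF property and the column condition, let μ be nonnegative utilities, let Q be a doubly stochastic matrix satisfying the 1-fairness constraints with respect to ℓ, and let M* be a permutation matrix maximizing U among all permutation matrices. Then the matrix P = (1−φ)·M* + φ·Q is doubly stochastic, satisfies the φ-fairness constraints with respect to ℓ, and satisfies U(P) ≥ (1−φ)·U(P') for every doubly stochastic matrix P'. -/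
/-- The permutation matrix of a bijection `σ` from individuals to resources. -/
def permMatrix (n : ℕ) (σ : Fin n ≃ Fin n) : Fin n → Fin n → ℝ :=
  fun x y => if σ x = y then 1 else 0


lemma util_le_of_ds (n : ℕ) (μ : Fin n → Fin n → ℝ)
    (σ : Fin n ≃ Fin n)
    (hopt : ∀ τ : Fin n ≃ Fin n, Util n μ (permMatrix n τ) ≤ Util n μ (permMatrix n σ))
    (P' : Fin n → Fin n → ℝ) (hP' : DoublyStochastic n P') :
    Util n μ P' ≤ Util n μ (permMatrix n σ) := by
  have hmem : (Matrix.of P') ∈ doublyStochastic ℝ (Fin n) := by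
    rw [mem_doublyStochastic_iff_sum]
    exact ⟨hP'.1, hP'.2.1, hP'.2.2⟩
  have hmem2 : (Matrix.of P') ∈ convexHull ℝ
      {M : Matrix (Fin n) (Fin n) ℝ | ∃ τ : Equiv.Perm (Fin n), τ.permMatrix ℝ = M} := by
    rw [← doublyStochastic_eq_convexHull_permMatrix]
    exact hmem
  have hlin : IsLinearMap ℝ (fun M : Matrix (Fin n) (Fin n) ℝ =>
      ∑ x : Fin n, ∑ y : Fin n, μ x y * M x y) := by
    constructor
    · intro M N
      simp [Matrix.add_apply, mul_add, Finset.sum_add_distrib]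
    · intro c M
      simp only [Matrix.smul_apply, smul_eq_mul, Finset.mul_sum]
      congr 1; ext x; congr 1; ext y; ring
  have hconv : Convex ℝ {M : Matrix (Fin n) (Fin n) ℝ |
      (∑ x : Fin n, ∑ y : Fin n, μ x y * M x y) ≤ Util n μ (permMatrix n σ)} :=
    convex_halfSpace_le hlin _
  have hsub : {M : Matrix (Fin n) (Fin n) ℝ | ∃ τ : Equiv.Perm (Fin n),
      τ.permMatrix ℝ = M} ⊆ {M : Matrix (Fin n) (Fin n) ℝ |
      (∑ x : Fin n, ∑ y : Fin n, μ x y * M x y) ≤ Util n μ (permMatrix n σ)} := by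
    rintro M ⟨τ, rfl⟩
    have h := hopt τ
    have : Util n μ (permMatrix n τ)
        = ∑ x : Fin n, ∑ y : Fin n, μ x y * (τ.permMatrix ℝ) x y := by
      unfold Util permMatrix
      congr 1; ext x; congr 1; ext y
      simp [Equiv.Perm.permMatrix, PEquiv.toMatrix_apply, Equiv.toPEquiv]
    simpa [this] using h
  have := convexHull_min hsub hconv hmem2
  exact this

/-- Mixing algorithm guarantee: if `Q` is doubly stochastic and 1-fair w.r.t. `ℓ`, and
`M* = permMatrix σ` maximizes utility among all permutation matrices, then
`P = (1−φ)·M* + φ·Q` is doubly stochastic, satisfies the φ-fairness constraints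
w.r.t. `ℓ`, and has utility at least `(1−φ)·U(P')` for every doubly stochastic `P'`. -/
theorem mixing_guarantee (n : ℕ) (r : Fin n → Fin n ≃ Fin n) (φ : ℝ)
    (hφ0 : 0 ≤ φ) (hφ1 : φ ≤ 1) (ℓ : Fin n → ℕ → ℝ)
    (hcdf : RowCDF n ℓ) (hcol : ColCond n r ℓ)
    (μ : Fin n → Fin n → ℝ) (hμ : ∀ x y, 0 ≤ μ x y)
    (Q : Fin n → Fin n → ℝ) (hQds : DoublyStochastic n Q)
    (hQfair : FairConstraints n r 1 ℓ Q)
    (σ : Fin n ≃ Fin n)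
    (hopt : ∀ τ : Fin n ≃ Fin n, Util n μ (permMatrix n τ) ≤ Util n μ (permMatrix n σ)) :
    DoublyStochastic n (fun x y => (1 - φ) * permMatrix n σ x y + φ * Q x y) ∧
      FairConstraints n r φ ℓ (fun x y => (1 - φ) * permMatrix n σ x y + φ * Q x y) ∧
      ∀ P' : Fin n → Fin n → ℝ, DoublyStochastic n P' →
        (1 - φ) * Util n μ P' ≤
          Util n μ (fun x y => (1 - φ) * permMatrix n σ x y + φ * Q x y) := by
  refine ⟨?_, ?_, ?_⟩
  · refine ⟨fun x y => ?_, fun x => ?_, fun y => ?_⟩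
    · have h1 : (0:ℝ) ≤ permMatrix n σ x y := by unfold permMatrix; positivity
      have := hQds.1 x y
      have h2 : (0:ℝ) ≤ 1 - φ := by linarith
      positivity
    · have hσ : ∑ y : Fin n, permMatrix n σ x y = 1 := by
        unfold permMatrix; simp
      rw [Finset.sum_add_distrib, ← Finset.mul_sum, ← Finset.mul_sum, hσ, hQds.2.1 x]
      ring
    · have hσ : ∑ x : Fin n, permMatrix n σ x y = 1 := by
        unfold permMatrix
        simp only [Equiv.apply_eq_iff_eq_symm_apply]
        simp
      rw [Finset.sum_add_distrib, ← Finset.mul_sum, ← Finset.mul_sum, hσ, hQds.2.2 y]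
      ring
  · intro x k hk1 hkn
    rw [Finset.sum_add_distrib, ← Finset.mul_sum, ← Finset.mul_sum]
    have hQ := hQfair x k hk1 hkn
    rw [one_mul] at hQ
    have h1 : (0:ℝ) ≤ (1 - φ) * ∑ y ∈ Finset.univ.filter (fun y : Fin n => (r x y : ℕ) < k), permMatrix n σ x y := by
      have : (0:ℝ) ≤ ∑ y ∈ Finset.univ.filter (fun y : Fin n => (r x y : ℕ) < k), permMatrix n σ x y :=
        Finset.sum_nonneg fun y _ => by unfold permMatrix; positivity
      have h2 : (0:ℝ) ≤ 1 - φ := by linarith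
      positivity
    nlinarith [Finset.sum_nonneg (fun y (_ : y ∈ Finset.univ.filter (fun y : Fin n => (r x y : ℕ) < k)) => hQds.1 x y)]
  · intro P' hP'
    have key := util_le_of_ds n μ σ hopt P' hP'
    have hQ0 : 0 ≤ Util n μ Q :=
      Finset.sum_nonneg fun x _ => Finset.sum_nonneg fun y _ =>
        mul_nonneg (hμ x y) (hQds.1 x y)
    have hsplit : Util n μ (fun x y => (1 - φ) * permMatrix n σ x y + φ * Q x y)
        = (1 - φ) * Util n μ (permMatrix n σ) + φ * Util n μ Q := by
      unfold Util
      rw [Finset.mul_sum, Finset.mul_sum, ← Finset.sum_add_distrib]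
      congr 1; ext x
      rw [Finset.mul_sum, Finset.mul_sum, ← Finset.sum_add_distrib]
      congr 1; ext y; ring
    have h2 : (0:ℝ) ≤ 1 - φ := by linarith
    nlinarith
end

section
/- Uniqueness of the 1-fair solution in the ranking case: Suppose all individuals have the same preference ranking, r_x = r for every x. Let ℓ be fairness values satisfying the per-row CDF property and the column condition, and let P be any doubly stochastic matrix satisfying the 1-fairness constraints with respect to ℓ. Then P equals the increment matrix of ℓ, i.e., P_{x,y} = ℓ_{x,r(y)} − ℓ_{x,r(y)−1} for all x, y; in particular, the 1-fair constraints hold with equality: ∑_{i=1}^k P_{x, r⁻¹(i)} = ℓ_{x,k} for all x and k. -/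
/-- Uniqueness of the 1-fair solution in the ranking case (all individuals share the same
ranking `r`): any doubly stochastic matrix `P` satisfying the 1-fairness constraints
w.r.t. fairness values `ℓ` (satisfying the per-row CDF property and the column condition)
equals the increment matrix of `ℓ`, and the 1-fairness constraints hold with equality. -/
theorem ranking_unique_fair (n : ℕ) (r : Fin n ≃ Fin n) (ℓ : Fin n → ℕ → ℝ)
    (hcdf : RowCDF n ℓ) (hcol : ColCond n (fun _ => r) ℓ)
    (P : Fin n → Fin n → ℝ) (hPds : DoublyStochastic n P)
    (hPfair : FairConstraints n (fun _ => r) 1 ℓ P) :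
    (∀ x y : Fin n, P x y = ℓ x ((r y : ℕ) + 1) - ℓ x (r y : ℕ)) ∧
      ∀ x : Fin n, ∀ k : ℕ, 1 ≤ k → k ≤ n →
        ∑ y ∈ Finset.univ.filter (fun y : Fin n => (r y : ℕ) < k), P x y = ℓ x k := by

  classical
  obtain ⟨hPnn, hProw, hPcol⟩ := hPds
  set F : ℕ → Finset (Fin n) := fun k => Finset.univ.filter (fun y : Fin n => (r y : ℕ) < k)
    with hF
  have sum_rank : ∀ (k : ℕ), k ≤ n → ∀ f : ℕ → ℝ,
      ∑ y ∈ F k, f (r y : ℕ) = ∑ i ∈ Finset.range k, f i := by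
    intro k hk f
    rw [hF]
    rw [Finset.sum_filter]
    rw [Fintype.sum_equiv r (fun a : Fin n => if (r a : ℕ) < k then f (r a : ℕ) else 0)
      (fun i : Fin n => if (i : ℕ) < k then f (i : ℕ) else 0) (fun a => rfl)]
    rw [Fin.sum_univ_eq_sum_range (fun j => if j < k then f j else 0) n]
    rw [← Finset.sum_filter]
    congr 1
    ext j
    simp only [Finset.mem_filter, Finset.mem_range]
    omega
  -- the sum over x of the partial sums equals k
  have hone : ∀ k : ℕ, k ≤ n → ∑ _y ∈ F k, (1 : ℝ) = (k : ℝ) := by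
    intro k hk
    simpa using sum_rank k hk (fun _ => (1 : ℝ))
  have hA : ∀ k : ℕ, k ≤ n → ∑ x : Fin n, ∑ y ∈ F k, P x y = (k : ℝ) := by
    intro k hk
    rw [Finset.sum_comm]
    rw [Finset.sum_congr rfl (fun y _ => hPcol y), hone k hk]
  have hB : ∀ k : ℕ, k ≤ n → ∑ x : Fin n, ℓ x k = (k : ℝ) := by
    intro k hk
    have h1 : ∑ y ∈ F k, ∑ x : Fin n, (ℓ x ((r y : ℕ) + 1) - ℓ x (r y : ℕ)) = (k : ℝ) := by
      have : ∀ y ∈ F k, ∑ x : Fin n, (ℓ x ((r y : ℕ) + 1) - ℓ x (r y : ℕ)) = 1 := by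
        intro y _; exact hcol y
      rw [Finset.sum_congr rfl this, hone k hk]
    rw [Finset.sum_comm] at h1
    have h2 : ∀ x : Fin n,
        ∑ y ∈ F k, (ℓ x ((r y : ℕ) + 1) - ℓ x (r y : ℕ)) = ℓ x k := by
      intro x
      have := sum_rank k hk (fun i => ℓ x (i + 1) - ℓ x i)
      rw [this, Finset.sum_range_sub (fun i => ℓ x i) k, (hcdf x).1, sub_zero]
    rw [Finset.sum_congr rfl (fun x _ => h2 x)] at h1
    exact h1
  have key : ∀ x : Fin n, ∀ k : ℕ, k ≤ n → ∑ y ∈ F k, P x y = ℓ x k := by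
    intro x k hk
    rcases Nat.eq_zero_or_pos k with h0 | h1
    · subst h0
      have : F 0 = ∅ := by
        rw [hF]; ext z; simp
      rw [this, (hcdf x).1, Finset.sum_empty]
    · have hge : ∀ z : Fin n, z ∈ Finset.univ → 0 ≤ ∑ y ∈ F k, P z y - ℓ z k := by
        intro z _
        have := hPfair z k h1 hk
        rw [one_mul] at this
        linarith
      have hsum : ∑ z : Fin n, (∑ y ∈ F k, P z y - ℓ z k) = 0 := by
        rw [Finset.sum_sub_distrib, hA k hk, hB k hk, sub_self]
      have := (Finset.sum_eq_zero_iff_of_nonneg hge).mp hsum x (Finset.mem_univ x)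
      linarith
  have hmain : ∀ x y : Fin n, P x y = ℓ x ((r y : ℕ) + 1) - ℓ x (r y : ℕ) := by
    intro x y
    have hlt : (r y : ℕ) < n := (r y).isLt
    have hins : F ((r y : ℕ) + 1) = insert y (F (r y : ℕ)) := by
      rw [hF]
      ext z
      simp only [Finset.mem_filter, Finset.mem_univ, true_and, Finset.mem_insert]
      constructor
      · intro h
        rcases Nat.lt_succ_iff_lt_or_eq.mp h with h' | h'
        · exact Or.inr h'
        · left
          exact r.injective (Fin.val_injective h')
      · rintro (rfl | h)
        · omega
        · omega
    have hynot : y ∉ F (r y : ℕ) := by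
      rw [hF]; simp
    have e1 := key x ((r y : ℕ) + 1) hlt
    have e2 := key x (r y : ℕ) (le_of_lt hlt)
    rw [hins, Finset.sum_insert hynot] at e1
    linarith
  exact ⟨hmain, fun x k _ hk => key x k hk⟩
end

section
/- Tightness of the fairness guarantee: For every n ≥ 2 and every ε ∈ (0,1), there exist fairness values ℓ and estimates ℓ̂, both satisfying the per-row CDF property and the column condition with respect to identical rankings (r_x = r for all x), with |ℓ̂_{x,k} − ℓ_{x,k}| ≤ ε/2 for all x, k, such that: ℓ_{1,1} = 1, and if ℓ̃_{x,k} = (ℓ̂_{x,k} + kε)/(nε+1), then the unique doubly stochastic matrix P̂ satisfying the 1-fairness constraints with respect to ℓ̃ assigns individual 1 her top-ranked resource with probability exactly P̂_{1, r⁻¹(1)} = (1+ε/2)/(nε+1) = ((1+ε/2)/(nε+1))·ℓ_{1,1}; i.e., the fairness level achieved with respect to ℓ is no better than (1+ε/2)/(nε+1). -/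
open Finset

section Increment

variable {n : ℕ}

theorem sum_filter_val_lt_comp {M : Type*} [AddCommMonoid M] (e : Fin n ≃ Fin n) {k : ℕ}
    (hk : k ≤ n) (g : ℕ → M) :
    ∑ y ∈ univ.filter (fun y : Fin n => (e y : ℕ) < k), g (e y) = ∑ i ∈ range k, g i := by
  rw [sum_filter, Equiv.sum_comp e (fun i : Fin n => if (i : ℕ) < k then g i else 0),
    Fin.sum_univ_eq_sum_range (fun i => if i < k then g i else 0), ← sum_filter]
  congr 1
  ext i
  simp only [mem_filter, mem_range]
  omega

theorem sum_filter_increment (r : Fin n → Fin n ≃ Fin n) (ℓ : Fin n → ℕ → ℝ) (x : Fin n)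
    {k : ℕ} (hk : k ≤ n) :
    ∑ y ∈ univ.filter (fun y : Fin n => (r x y : ℕ) < k), increment n r ℓ x y =
      ℓ x k - ℓ x 0 := by
  rw [← sum_range_sub]
  exact sum_filter_val_lt_comp (r x) hk fun i => ℓ x (i + 1) - ℓ x i

theorem doublyStochastic_increment {r : Fin n → Fin n ≃ Fin n} {ℓ : Fin n → ℕ → ℝ}
    (hℓ : RowCDF n ℓ) (hcol : ColCond n r ℓ) : DoublyStochastic n (increment n r ℓ) := by
  refine ⟨fun x y => sub_nonneg.2 ((hℓ x).2.2 _ (r x y).isLt), fun x => ?_, hcol⟩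
  have hall := sum_filter_increment r ℓ x le_rfl
  rwa [filter_true_of_mem fun y _ => (r x y).isLt, (hℓ x).1, (hℓ x).2.1, sub_zero] at hall

theorem fairConstraints_increment (r : Fin n → Fin n ≃ Fin n) {ℓ : Fin n → ℕ → ℝ}
    (h0 : ∀ x, ℓ x 0 = 0) : FairConstraints n r 1 ℓ (increment n r ℓ) := fun x k _ hk => by
  rw [sum_filter_increment r ℓ x hk, h0, sub_zero, one_mul]

theorem colCond_of_sum_eq (r : Fin n ≃ Fin n) {ℓ : Fin n → ℕ → ℝ}
    (hsum : ∀ k ≤ n, ∑ x, ℓ x k = k) : ColCond n (fun _ => r) ℓ := fun y => by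
  rw [sum_sub_distrib, hsum _ (r y).isLt, hsum _ (r y).isLt.le]
  push_cast
  ring

/-- The `k` top columns of `P` carry total mass `k`, so constraints adding up to `k` are tight. -/
theorem sum_filter_eq_of_fairConstraints (r : Fin n ≃ Fin n) {ℓ : Fin n → ℕ → ℝ}
    {P : Fin n → Fin n → ℝ} (hcol : ∀ y, ∑ x, P x y = 1)
    (hP : FairConstraints n (fun _ => r) 1 ℓ P) {k : ℕ} (hk1 : 1 ≤ k) (hkn : k ≤ n)
    (hsum : ∑ x, ℓ x k = k) (x : Fin n) :
    ∑ y ∈ univ.filter (fun y : Fin n => (r y : ℕ) < k), P x y = ℓ x k := by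
  have hle : ∀ x ∈ univ, ℓ x k ≤ ∑ y ∈ univ.filter (fun y : Fin n => (r y : ℕ) < k), P x y :=
    fun x _ => by simpa only [one_mul] using hP x k hk1 hkn
  have htotal : ∑ x, ∑ y ∈ univ.filter (fun y : Fin n => (r y : ℕ) < k), P x y = k := by
    rw [sum_comm]
    simpa only [hcol, sum_const, card_range, nsmul_eq_mul, mul_one] using
      sum_filter_val_lt_comp r hkn fun _ => (1 : ℝ)
  exact ((sum_eq_sum_iff_of_le hle).1 (hsum.trans htotal.symm) x (mem_univ x)).symm

theorem apply_symm_zero_eq_of_fairConstraints (hn : 0 < n) (r : Fin n ≃ Fin n)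
    {ℓ : Fin n → ℕ → ℝ} {P : Fin n → Fin n → ℝ} (hcol : ∀ y, ∑ x, P x y = 1)
    (hP : FairConstraints n (fun _ => r) 1 ℓ P) (hsum : ∑ x, ℓ x 1 = 1) (x : Fin n) :
    P x (r.symm ⟨0, hn⟩) = ℓ x 1 := by
  have htop : univ.filter (fun y : Fin n => (r y : ℕ) < 1) = {r.symm ⟨0, hn⟩} := by
    ext y
    simp [Equiv.eq_symm_apply, Fin.ext_iff]
  have h := sum_filter_eq_of_fairConstraints r hcol hP le_rfl hn (by exact_mod_cast hsum) x
  rwa [htop, sum_singleton] at h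

end Increment

section Smoothing

noncomputable def smoothedValues (n : ℕ) (ε : ℝ) (ℓ : Fin n → ℕ → ℝ) : Fin n → ℕ → ℝ :=
  fun x k => (ℓ x k + k * ε) / (n * ε + 1)

variable {n : ℕ} {ε : ℝ} {ℓ : Fin n → ℕ → ℝ}

theorem rowCDF_smoothedValues (hε : 0 ≤ ε) (hℓ : RowCDF n ℓ) :
    RowCDF n (smoothedValues n ε ℓ) := fun x => by
  have hpos : (0 : ℝ) < n * ε + 1 := by positivity
  obtain ⟨h0, hn, hmono⟩ := hℓ x
  refine ⟨by simp [smoothedValues, h0], by simp [smoothedValues, hn, add_comm, hpos.ne'],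
    fun k hk => ?_⟩
  unfold smoothedValues
  gcongr
  · exact hmono k hk
  · exact_mod_cast k.le_succ

theorem sum_smoothedValues (hε : 0 ≤ ε) {k : ℕ} (hsum : ∑ x, ℓ x k = k) :
    ∑ x, smoothedValues n ε ℓ x k = k := by
  have hpos : (0 : ℝ) < n * ε + 1 := by positivity
  simp only [smoothedValues, ← sum_div, sum_add_distrib, hsum, sum_const, card_univ,
    Fintype.card_fin, nsmul_eq_mul]
  field_simp
  ring

end Smoothing

section Example

def diagValues (n : ℕ) : Fin n → ℕ → ℝ := fun x k => if (x : ℕ) < k then 1 else 0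

noncomputable def perturbedDiagValues (n : ℕ) (ε : ℝ) : Fin n → ℕ → ℝ := fun x k =>
  if k = 1 ∧ (x : ℕ) = 0 then 1 - ε / 2
  else if k = 1 ∧ (x : ℕ) = 1 then ε / 2 else diagValues n x k

variable {n : ℕ} {ε : ℝ}

theorem rowCDF_diagValues : RowCDF n (diagValues n) := fun x => by
  refine ⟨by simp [diagValues], by simp [diagValues], fun k _ => ?_⟩
  unfold diagValues
  split_ifs <;> first | omega | norm_num

theorem sum_diagValues {k : ℕ} (hk : k ≤ n) : ∑ x, diagValues n x k = k := by
  simp [diagValues, sum_boole, Fin.card_filter_val_lt, hk]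

theorem rowCDF_perturbedDiagValues (hn : 2 ≤ n) (hε0 : 0 ≤ ε) (hε2 : ε ≤ 2) :
    RowCDF n (perturbedDiagValues n ε) := fun x => by
  refine ⟨by simp [perturbedDiagValues, diagValues], ?_, fun k hk => ?_⟩
  · simp [perturbedDiagValues, diagValues, show n ≠ 1 by omega]
  · unfold perturbedDiagValues diagValues
    split_ifs <;> linarith

theorem sum_perturbedDiagValues (hn : 2 ≤ n) {k : ℕ} (hk : k ≤ n) :
    ∑ x, perturbedDiagValues n ε x k = k := by
  by_cases hk1 : k = 1
  · obtain ⟨m, rfl⟩ : ∃ m, n = m + 2 := ⟨n - 2, by omega⟩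
    simp [hk1, Fin.sum_univ_succ, perturbedDiagValues, diagValues]
  · rw [← sum_diagValues hk]
    exact sum_congr rfl fun x _ => by simp [perturbedDiagValues, hk1]

theorem abs_perturbedDiagValues_sub_le (hε : 0 ≤ ε) (x : Fin n) (k : ℕ) :
    |perturbedDiagValues n ε x k - diagValues n x k| ≤ ε / 2 := by
  unfold perturbedDiagValues
  split_ifs with h0 h1
  · simpa [diagValues, h0.1, h0.2] using (abs_of_nonneg (by positivity : 0 ≤ ε / 2)).le
  · simpa [diagValues, h1.1, h1.2] using (abs_of_nonneg (by positivity : 0 ≤ ε / 2)).le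
  · rw [sub_self, abs_zero]
    positivity

end Example

/-- Tightness of the fairness guarantee (Proposition 5, fairness part): for every `n ≥ 2`
and `ε ∈ (0,1)` there are fairness values `ℓ` and estimates `ℓ̂` within `ε/2` of `ℓ`
(both CDF rows and column condition, for identical rankings `r`) with `ℓ_{1,1} = 1`, such
that a doubly stochastic matrix that is 1-fair w.r.t. `ℓ̃_{x,k} = (ℓ̂_{x,k} + kε)/(nε+1)`
exists, and every such matrix `P̂` assigns individual 1 her top-ranked resource with
probability exactly `(1+ε/2)/(nε+1) = ((1+ε/2)/(nε+1))·ℓ_{1,1}`. -/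
theorem tightness_fairness (n : ℕ) (hn : 2 ≤ n) (ε : ℝ) (hε0 : 0 < ε) (hε1 : ε < 1) :
    ∃ (r : Fin n ≃ Fin n) (ℓ ℓhat : Fin n → ℕ → ℝ),
      RowCDF n ℓ ∧ ColCond n (fun _ => r) ℓ ∧
      RowCDF n ℓhat ∧ ColCond n (fun _ => r) ℓhat ∧
      (∀ x : Fin n, ∀ k : ℕ, k ≤ n → |ℓhat x k - ℓ x k| ≤ ε / 2) ∧
      ℓ ⟨0, by omega⟩ 1 = 1 ∧
      (∃ Phat : Fin n → Fin n → ℝ, DoublyStochastic n Phat ∧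
        FairConstraints n (fun _ => r) 1
          (fun x k => (ℓhat x k + k * ε) / (n * ε + 1)) Phat) ∧
      (∀ Phat : Fin n → Fin n → ℝ, DoublyStochastic n Phat →
        FairConstraints n (fun _ => r) 1
          (fun x k => (ℓhat x k + k * ε) / (n * ε + 1)) Phat →
        Phat ⟨0, by omega⟩ (r.symm ⟨0, by omega⟩) = (1 + ε / 2) / (n * ε + 1) ∧
          Phat ⟨0, by omega⟩ (r.symm ⟨0, by omega⟩) =
            ((1 + ε / 2) / (n * ε + 1)) * ℓ ⟨0, by omega⟩ 1) := by
  set r := Equiv.refl (Fin n)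
  set ℓhat := perturbedDiagValues n ε
  have hsum : ∀ k ≤ n, ∑ x, ℓhat x k = k := fun k hk => sum_perturbedDiagValues hn hk
  have hsumSmooth : ∀ k ≤ n, ∑ x, smoothedValues n ε ℓhat x k = k :=
    fun k hk => sum_smoothedValues hε0.le (hsum k hk)
  have hcdf : RowCDF n ℓhat := rowCDF_perturbedDiagValues hn hε0.le (by linarith)
  have hcdfSmooth := rowCDF_smoothedValues hε0.le hcdf
  have hdiag : diagValues n ⟨0, by omega⟩ 1 = 1 := by simp [diagValues]
  refine ⟨r, diagValues n, ℓhat, rowCDF_diagValues,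
    colCond_of_sum_eq r fun k hk => sum_diagValues hk, hcdf, colCond_of_sum_eq r hsum, fun x k _ => abs_perturbedDiagValues_sub_le hε0.le x k, hdiag,
    ⟨_, doublyStochastic_increment hcdfSmooth (colCond_of_sum_eq r hsumSmooth),
      fairConstraints_increment _ fun x => (hcdfSmooth x).1⟩, fun P hP hfair => ?_⟩
  have htop := apply_symm_zero_eq_of_fairConstraints (ℓ := smoothedValues n ε ℓhat) (by omega) r
    hP.2.2 hfair (by exact_mod_cast hsumSmooth 1 (by omega)) ⟨0, by omega⟩
  have hvalue : smoothedValues n ε ℓhat ⟨0, by omega⟩ 1 = (1 + ε / 2) / (n * ε + 1) := by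
    simp only [smoothedValues, ℓhat, perturbedDiagValues, and_self, if_true, Nat.cast_one]
    ring
  rw [hdiag, mul_one]
  exact ⟨htop.trans hvalue, htop.trans hvalue⟩
end
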